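/- For the Finsler space with F = e^{−x1}(y2³ + e^{−x1 x3} y3 y1²)^{1/3} on {y1 ≠ 0, y2 = 0}, the Lie bracket of the nullity vector fields X = h₁ and Y = h₃ (where h_i is the horizontal frame of the Barthel connection with N^1_1 = −½(3+x3)y1, N^2_1 = −(3/4)y2, N^2_2 = −(3/4)y1, N^3_1 = −(3/4)y2³ e^{x1 x3}/y1², N^3_2 = (9/4)y2² e^{x1 x3}/y1, N^3_3 = −y3 x1) equals −(y1/2)∂/∂y1 + y3 ∂/∂y3, which is a vertical vector field. -/

import Mathlib

/-!
Both `h₁` and `h₃` have constant horizontal part, so their bracket is vertical: it is the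
difference of the derivatives of their vertical parts along each other. All coefficients involved
are polynomial except `N^3_1`, which is cubic in `y2` and so has vanishing derivative on `y2 = 0`.
-/

open scoped BigOperators

/-- The phase space `ℝ³ × ℝ³` with coordinates `(x, y)`. -/
abbrev E : Type := (Fin 3 → ℝ) × (Fin 3 → ℝ)

/-- The Lie bracket of two vector fields on `E`. -/
noncomputable def lieB (X Y : E → E) (z : E) : E :=
  fderiv ℝ Y z (X z) - fderiv ℝ X z (Y z)

/-- The Barthel connection coefficients `N^i_j` of
`F = e^{−x1}(y2³ + e^{−x1x3} y3 y1²)^{1/3}`. -/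
noncomputable def NN (x y : Fin 3 → ℝ) : Fin 3 → Fin 3 → ℝ := fun i j =>
  (!![-(1 / 2) * (3 + x 2) * y 0, 0, 0;
      -(3 / 4) * y 1, -(3 / 4) * y 0, 0;
      -(3 / 4) * (y 1) ^ 3 * Real.exp ((x 0) * (x 2)) / (y 0) ^ 2,
        (9 / 4) * (y 1) ^ 2 * Real.exp ((x 0) * (x 2)) / (y 0),
        -(y 2) * (x 0)] : Matrix (Fin 3) (Fin 3) ℝ) i j

/-- The horizontal frame `h_i = ∂/∂x^i − N^j_i ∂/∂y^j` of the Barthel connection. -/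
noncomputable def hh (i : Fin 3) : E → E := fun z =>
  (Pi.single i 1, fun j => -NN z.1 z.2 j i)

theorem HasFDerivAt.pow_mul_of_eq_zero {𝕜 F : Type*} [NontriviallyNormedField 𝕜]
    [NormedAddCommGroup F] [NormedSpace 𝕜 F] {f φ : F → 𝕜} {f' : F →L[𝕜] 𝕜} {z : F} {n : ℕ}
    (hf : HasFDerivAt f f' z) (hφ : DifferentiableAt 𝕜 φ z) (hz : f z = 0) (hn : 2 ≤ n) :
    HasFDerivAt (fun w => f w ^ n * φ w) (0 : F →L[𝕜] 𝕜) z := by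
  refine ((hf.pow n).mul hφ.hasFDerivAt).congr_fderiv ?_
  ext v
  simp [hz, zero_pow (show n - 1 ≠ 0 by omega), zero_pow (show n ≠ 0 by omega)]

noncomputable def xCoord (k : Fin 3) : E →L[ℝ] ℝ :=
  (ContinuousLinearMap.proj k).comp (ContinuousLinearMap.fst ℝ (Fin 3 → ℝ) (Fin 3 → ℝ))

noncomputable def yCoord (k : Fin 3) : E →L[ℝ] ℝ :=
  (ContinuousLinearMap.proj k).comp (ContinuousLinearMap.snd ℝ (Fin 3 → ℝ) (Fin 3 → ℝ))

@[simp] lemma xCoord_apply (k : Fin 3) (w : E) : xCoord k w = w.1 k := rfl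

@[simp] lemma yCoord_apply (k : Fin 3) (w : E) : yCoord k w = w.2 k := rfl

lemma hasFDerivAt_xCoord (k : Fin 3) (z : E) : HasFDerivAt (fun w : E => w.1 k) (xCoord k) z :=
  (xCoord k).hasFDerivAt

lemma hasFDerivAt_yCoord (k : Fin 3) (z : E) : HasFDerivAt (fun w : E => w.2 k) (yCoord k) z :=
  (yCoord k).hasFDerivAt

lemma lieB_prodMk_const {a b : Fin 3 → ℝ} {f g : E → Fin 3 → ℝ} {f' g' : E →L[ℝ] (Fin 3 → ℝ)}
    {z : E} (hf : HasFDerivAt f f' z) (hg : HasFDerivAt g g' z) :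
    lieB (fun w => (a, f w)) (fun w => (b, g w)) z = (0, g' (a, f z) - f' (b, g z)) := by
  rw [lieB, ((hasFDerivAt_const b z).prodMk hg).fderiv, ((hasFDerivAt_const a z).prodMk hf).fderiv]
  simp

lemma hasFDerivAt_hh_zero_snd {z : E} (hy0 : z.2 0 ≠ 0) (hy1 : z.2 1 = 0) :
    HasFDerivAt (fun w => (hh 0 w).2)
      (ContinuousLinearMap.pi ![(1 / 2 * (3 + z.1 2)) • yCoord 0 + (z.2 0 / 2) • xCoord 2,
        (3 / 4 : ℝ) • yCoord 1, 0]) z := by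
  refine hasFDerivAt_pi.2 fun j => ?_
  fin_cases j
  · refine ((((hasFDerivAt_xCoord 2 z).const_add 3).const_mul (1 / 2)).mul
      (hasFDerivAt_yCoord 0 z)).congr_of_eventuallyEq (.of_forall fun w => ?_) |>.congr_fderiv ?_
    · simp [hh, NN]
    · ext w <;> simp; ring
  · refine ((hasFDerivAt_yCoord 1 z).const_mul (3 / 4)).congr_of_eventuallyEq
      (.of_forall fun w => ?_)
    simp [hh, NN]
  · have hφ : DifferentiableAt ℝ (fun w : E => 3 / 4 * Real.exp (w.1 0 * w.1 2) / w.2 0 ^ 2) z := by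
      fun_prop (disch := positivity)
    refine ((hasFDerivAt_yCoord 1 z).pow_mul_of_eq_zero hφ hy1 (n := 3) (by norm_num))
      |>.congr_of_eventuallyEq (.of_forall fun w => ?_)
    simp [hh, NN]
    ring

lemma hasFDerivAt_hh_two_snd (z : E) :
    HasFDerivAt (fun w => (hh 2 w).2)
      (ContinuousLinearMap.pi ![0, 0, z.2 2 • xCoord 0 + z.1 0 • yCoord 2]) z := by
  refine hasFDerivAt_pi.2 fun j => ?_
  fin_cases j
  · exact (hasFDerivAt_const 0 z).congr_of_eventuallyEq (.of_forall fun w => by simp [hh, NN])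
  · exact (hasFDerivAt_const 0 z).congr_of_eventuallyEq (.of_forall fun w => by simp [hh, NN])
  · exact ((hasFDerivAt_yCoord 2 z).mul (hasFDerivAt_xCoord 0 z)).congr_of_eventuallyEq
      (.of_forall fun w => by simp [hh, NN])

/-- on `{y1 ≠ 0, y2 = 0}`, the Lie bracket of the nullity vector fields
`X = h₁` and `Y = h₃` equals `−(y1/2)∂/∂y1 + y3 ∂/∂y3`, a vertical vector field. -/
theorem statement7 :
    ∀ z : E, z.2 0 ≠ 0 → z.2 1 = 0 →
      lieB (hh 0) (hh 2) z = (0, ![-(z.2 0) / 2, 0, z.2 2]) := by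
  intro z hy0 hy1
  change lieB (fun w => (Pi.single 0 1, (hh 0 w).2)) (fun w => (Pi.single 2 1, (hh 2 w).2)) z = _
  rw [lieB_prodMk_const (hasFDerivAt_hh_zero_snd hy0 hy1) (hasFDerivAt_hh_two_snd z)]
  congr 1
  funext j
  fin_cases j <;> simp [hh, NN, hy1]; ring
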